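/- arXiv:1211.0777 — 2 statements merged into one kernel-verified Lean document; each statement's English description precedes it below -/
import Mathlib

section
/- Let g ∈ L²(ℝ²) be such that y·g(x,y) and y²·g(x,y) are both in L²(ℝ²), and suppose that for almost every x ∈ ℝ one has ∫_ℝ g(x,y) dy = 0. Define f(x,y) = ∫_0^∞ g(x, t+y) dt. Then f ∈ L²(ℝ²) and ‖f‖ ≤ 2(‖g‖ + ‖y·g‖ + ‖y²·g‖), where ‖·‖ denotes the L²(ℝ²) norm. -/
/-!
For fixed `x`, write `h = g(x, ·)` and `w(s) = 1 + s⁴`. For `y ≥ 0`, `f(x, y)` is the integral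
of `h` over `(y, ∞)`; for `y < 0`, the vanishing of `∫ h` turns it into minus the integral over
`(-∞, y]`. Either way `f(x, y)` is an integral of `h` over a ray `R_y = outerRay y` that avoids
`0`, and Cauchy–Schwarz with weight `w` gives `|f(x, y)|² ≤ (∫_{R_y} w⁻¹) · ∫ w |h|²`. Each `s`
lies in `R_y` only for `y` between `0` and `s`, so by Tonelli
`∫ (∫_{R_y} w⁻¹) dy ≤ ∫ |s| / (1 + s⁴) ds ≤ ∫ 1 / (1 + s²) ds = π`.
Integrating over `x` then gives `‖f‖² ≤ π (‖g‖² + ‖y² g‖²) ≤ 4 (‖g‖ + ‖y² g‖)²`.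
-/

open MeasureTheory Set Real
open scoped ENNReal

theorem ENNReal.lintegral_sq_le_lintegral_inv_mul_lintegral_mul_sq {α : Type*}
    [MeasurableSpace α] {μ : Measure α} {w f : α → ℝ≥0∞} (hw : AEMeasurable w μ)
    (hf : AEMeasurable f μ) (hw₀ : ∀ a, w a ≠ 0) (hw_top : ∀ a, w a ≠ ∞) :
    (∫⁻ a, f a ∂μ) ^ 2 ≤ (∫⁻ a, (w a)⁻¹ ∂μ) * ∫⁻ a, w a * f a ^ 2 ∂μ := by
  have hsplit : ∀ a, f a = (w a)⁻¹ ^ (1 / 2 : ℝ) * (w a * f a ^ 2) ^ (1 / 2 : ℝ) := fun a => by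
    rw [← ENNReal.mul_rpow_of_nonneg _ _ (by norm_num), ← mul_assoc,
      ENNReal.inv_mul_cancel (hw₀ a) (hw_top a), one_mul, ← ENNReal.rpow_natCast,
      ← ENNReal.rpow_mul]
    norm_num
  have holder := ENNReal.lintegral_mul_norm_pow_le hw.inv (hw.mul (hf.pow_const 2))
    (p := 1 / 2) (q := 1 / 2) (by norm_num) (by norm_num) (by norm_num)
  calc (∫⁻ a, f a ∂μ) ^ 2
      = (∫⁻ a, (w a)⁻¹ ^ (1 / 2 : ℝ) * (w a * f a ^ 2) ^ (1 / 2 : ℝ) ∂μ) ^ 2 := by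
        rw [lintegral_congr hsplit]
    _ ≤ ((∫⁻ a, (w a)⁻¹ ∂μ) ^ (1 / 2 : ℝ) * (∫⁻ a, w a * f a ^ 2 ∂μ) ^ (1 / 2 : ℝ)) ^ 2 := by
        gcongr
        exact holder
    _ = _ := by
        rw [mul_pow, ← ENNReal.rpow_natCast, ← ENNReal.rpow_natCast, ← ENNReal.rpow_mul,
          ← ENNReal.rpow_mul]
        norm_num

theorem eLpNorm_two_sq {α E : Type*} [MeasurableSpace α] {μ : Measure α} [NormedAddCommGroup E]
    (f : α → E) : eLpNorm f 2 μ ^ 2 = ∫⁻ a, ‖f a‖ₑ ^ 2 ∂μ := by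
  simpa using eLpNorm_nnreal_pow_eq_lintegral (f := f) (μ := μ) (p := 2) two_ne_zero

theorem lintegral_ofReal_one_add_pow_four_mul_enorm_sq {X : Type*} [MeasurableSpace X]
    {μ : Measure X} {u : X → ℝ} {h : X → ℂ} (hh : AEMeasurable h μ) :
    ∫⁻ p, ENNReal.ofReal (1 + u p ^ 4) * ‖h p‖ₑ ^ 2 ∂μ =
      eLpNorm h 2 μ ^ 2 + eLpNorm (fun p => (u p : ℂ) ^ 2 * h p) 2 μ ^ 2 := by
  have hpt : ∀ p, ENNReal.ofReal (1 + u p ^ 4) * ‖h p‖ₑ ^ 2 =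
      ‖h p‖ₑ ^ 2 + ‖(u p : ℂ) ^ 2 * h p‖ₑ ^ 2 := fun p => by
    rw [ENNReal.ofReal_add zero_le_one (by positivity), ENNReal.ofReal_one, add_mul, one_mul,
      enorm_mul, enorm_pow, mul_pow, ← pow_mul,
      show ‖(u p : ℂ)‖ₑ = ENNReal.ofReal |u p| by
        rw [← ofReal_norm, Complex.norm_real, Real.norm_eq_abs],
      ← ENNReal.ofReal_pow (abs_nonneg _), (even_two_mul 2).pow_abs]
    rfl
  rw [lintegral_congr hpt, lintegral_add_left' (hh.enorm.pow_const 2), eLpNorm_two_sq,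
    eLpNorm_two_sq]

theorem lintegral_ofReal_inv_one_add_sq :
    ∫⁻ s : ℝ, ENNReal.ofReal (1 + s ^ 2)⁻¹ = ENNReal.ofReal π := by
  rw [← ofReal_integral_eq_lintegral_ofReal integrable_inv_one_add_sq
    (.of_forall fun s => by positivity), integral_univ_inv_one_add_sq]

theorem inv_ofReal_one_add_pow_four_le (s : ℝ) :
    (ENNReal.ofReal (1 + s ^ 4))⁻¹ ≤ 2 * ENNReal.ofReal (1 + s ^ 2)⁻¹ := by
  rw [← ENNReal.ofReal_inv_of_pos (by positivity), ← ENNReal.ofReal_ofNat 2,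
    ← ENNReal.ofReal_mul zero_le_two]
  refine ENNReal.ofReal_le_ofReal ?_
  field_simp
  nlinarith [sq_nonneg (s ^ 2 - 1)]

theorem ofReal_abs_mul_inv_ofReal_one_add_pow_four_le (s : ℝ) :
    ENNReal.ofReal |s| * (ENNReal.ofReal (1 + s ^ 4))⁻¹ ≤ ENNReal.ofReal (1 + s ^ 2)⁻¹ := by
  rw [← ENNReal.ofReal_inv_of_pos (by positivity), ← ENNReal.ofReal_mul (abs_nonneg s)]
  refine ENNReal.ofReal_le_ofReal ?_
  field_simp
  rw [← sq_abs s, ← abs_of_nonneg (by positivity : 0 ≤ s ^ 4), ← pow_abs]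
  nlinarith [mul_nonneg (sq_nonneg (1 - |s|)) (by positivity : 0 ≤ 1 + |s| + |s| ^ 2)]

def outerRay (y : ℝ) : Set ℝ := if 0 ≤ y then Ioi y else Iic y

theorem measurableSet_outerRay : MeasurableSet {p : ℝ × ℝ | p.2 ∈ outerRay p.1} := by
  have : {p : ℝ × ℝ | p.2 ∈ outerRay p.1} =
      {p | 0 ≤ p.1} ∩ {p | p.1 < p.2} ∪ {p | p.1 < 0} ∩ {p | p.2 ≤ p.1} := by
    ext ⟨y, s⟩
    by_cases hy : 0 ≤ y
    · simp [outerRay, hy]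
    · simp [outerRay, hy, not_le.1 hy]
  rw [this]
  exact ((measurableSet_le measurable_const measurable_fst).inter
    (measurableSet_lt measurable_fst measurable_snd)).union
    ((measurableSet_lt measurable_fst measurable_const).inter
    (measurableSet_le measurable_snd measurable_fst))

theorem mem_uIcc_of_mem_outerRay {y s : ℝ} (h : s ∈ outerRay y) : y ∈ uIcc 0 s := by
  by_cases hy : 0 ≤ y
  · rw [outerRay, if_pos hy] at h
    exact mem_uIcc.2 (Or.inl ⟨hy, le_of_lt h⟩)
  · rw [outerRay, if_neg hy] at h
    exact mem_uIcc.2 (Or.inr ⟨h, (not_le.1 hy).le⟩)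

theorem lintegral_lintegral_outerRay_le {φ : ℝ → ℝ≥0∞} (hφ : Measurable φ) :
    ∫⁻ y, ∫⁻ s in outerRay y, φ s ≤ ∫⁻ s, ENNReal.ofReal |s| * φ s := by
  calc ∫⁻ y, ∫⁻ s in outerRay y, φ s
      = ∫⁻ y, ∫⁻ s, (outerRay y).indicator φ s := lintegral_congr fun y =>
        (lintegral_indicator (measurable_prodMk_left measurableSet_outerRay) _).symm
    _ = ∫⁻ s, ∫⁻ y, (outerRay y).indicator φ s :=
        lintegral_lintegral_swap
          ((hφ.comp measurable_snd).indicator measurableSet_outerRay).aemeasurable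
    _ ≤ ∫⁻ s, ∫⁻ y, (uIcc 0 s).indicator (fun _ => φ s) y := by
        gcongr with s y
        by_cases hs : s ∈ outerRay y
        · rw [indicator_of_mem hs, indicator_of_mem (mem_uIcc_of_mem_outerRay hs)]
        · rw [indicator_of_notMem hs]
          exact zero_le
    _ = ∫⁻ s, ENNReal.ofReal |s| * φ s := lintegral_congr fun s => by
        rw [lintegral_indicator_const measurableSet_uIcc, Real.volume_interval, sub_zero,
          mul_comm]

theorem enorm_setIntegral_Ioi_le_lintegral_outerRay {E : Type*} [NormedAddCommGroup E]
    [NormedSpace ℝ E] {h : ℝ → E} (hint : Integrable h) (hzero : ∫ s, h s = 0) (y : ℝ) :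
    ‖∫ s in Ioi y, h s‖ₑ ≤ ∫⁻ s in outerRay y, ‖h s‖ₑ := by
  by_cases hy : 0 ≤ y
  · rw [outerRay, if_pos hy]
    exact enorm_integral_le_lintegral_enorm _
  · have hsplit := intervalIntegral.integral_Iic_add_Ioi hint.integrableOn hint.integrableOn
      (b := y)
    rw [hzero, add_eq_zero_iff_neg_eq] at hsplit
    rw [outerRay, if_neg hy, ← hsplit, enorm_neg]
    exact enorm_integral_le_lintegral_enorm _

theorem lintegral_enorm_setIntegral_Ioi_sq_le {E : Type*} [NormedAddCommGroup E]
    [NormedSpace ℝ E] {h : ℝ → E} (hm : AEStronglyMeasurable h) (hzero : ∫ s, h s = 0) :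
    ∫⁻ y, ‖∫ s in Ioi y, h s‖ₑ ^ 2 ≤
      ENNReal.ofReal π * ∫⁻ s, ENNReal.ofReal (1 + s ^ 4) * ‖h s‖ₑ ^ 2 := by
  set w : ℝ → ℝ≥0∞ := fun s => ENNReal.ofReal (1 + s ^ 4)
  set J := ∫⁻ s, w s * ‖h s‖ₑ ^ 2
  have hw : Measurable w := by fun_prop
  have hCS : ∀ S : Set ℝ, (∫⁻ s in S, ‖h s‖ₑ) ^ 2 ≤ (∫⁻ s in S, (w s)⁻¹) * J := fun S =>
    (ENNReal.lintegral_sq_le_lintegral_inv_mul_lintegral_mul_sq hw.aemeasurable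
      hm.enorm.restrict (fun s => (ENNReal.ofReal_pos.2 (by positivity)).ne') (fun _ => ENNReal.ofReal_ne_top)).trans
      (by gcongr; exact setLIntegral_le_lintegral _ _)
  rcases eq_top_or_lt_top J with hJ | hJ
  · simp [J, hJ, ENNReal.mul_top, pi_pos]
  have hw_inv : ∫⁻ s, (w s)⁻¹ < ∞ := calc
    ∫⁻ s, (w s)⁻¹ ≤ ∫⁻ s, 2 * ENNReal.ofReal (1 + s ^ 2)⁻¹ :=
      lintegral_mono inv_ofReal_one_add_pow_four_le
    _ < ∞ := by
      rw [lintegral_const_mul _ (by fun_prop), lintegral_ofReal_inv_one_add_sq]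
      exact ENNReal.mul_lt_top (by norm_num) ENNReal.ofReal_lt_top
  have hint : Integrable h := by
    refine ⟨hm, ?_⟩
    have := (hCS univ).trans_lt (ENNReal.mul_lt_top (by rwa [Measure.restrict_univ]) hJ)
    simpa [HasFiniteIntegral] using this
  calc ∫⁻ y, ‖∫ s in Ioi y, h s‖ₑ ^ 2
      ≤ ∫⁻ y, (∫⁻ s in outerRay y, (w s)⁻¹) * J := lintegral_mono fun y =>
        (pow_le_pow_left' (enorm_setIntegral_Ioi_le_lintegral_outerRay hint hzero y) 2).trans
          (hCS _)
    _ = (∫⁻ y, ∫⁻ s in outerRay y, (w s)⁻¹) * J := lintegral_mul_const' _ _ hJ.ne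
    _ ≤ (∫⁻ s, ENNReal.ofReal |s| * (w s)⁻¹) * J :=
        mul_le_mul_left (lintegral_lintegral_outerRay_le hw.inv) _
    _ ≤ (∫⁻ s, ENNReal.ofReal (1 + s ^ 2)⁻¹) * J :=
        mul_le_mul_left (lintegral_mono ofReal_abs_mul_inv_ofReal_one_add_pow_four_le) _
    _ = ENNReal.ofReal π * J := by rw [lintegral_ofReal_inv_one_add_sq]

theorem setIntegral_Ioi_zero_comp_add_right {E : Type*} [NormedAddCommGroup E]
    [NormedSpace ℝ E] (h : ℝ → E) (y : ℝ) : ∫ t in Ioi 0, h (t + y) = ∫ s in Ioi y, h s := by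
  have := (measurePreserving_add_right volume y).setIntegral_preimage_emb
    (measurableEmbedding_addRight y) h (Ioi y)
  rwa [preimage_add_const_Ioi, sub_self] at this

theorem aestronglyMeasurable_setIntegral_Ioi_snd {α E : Type*} [MeasurableSpace α]
    [NormedAddCommGroup E] [NormedSpace ℝ E] {μ : Measure α} [SFinite μ] {ν : Measure ℝ}
    [SFinite ν] {g : α × ℝ → E} (hg : AEStronglyMeasurable g (μ.prod ν)) :
    AEStronglyMeasurable (fun p : α × ℝ => ∫ s in Ioi p.2, g (p.1, s) ∂ν) (μ.prod ν) := by
  have hshift : AEStronglyMeasurable (fun q : (α × ℝ) × ℝ => g (q.1.1, q.2))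
      ((μ.prod ν).prod ν) :=
    hg.comp_quasiMeasurePreserving
      (QuasiMeasurePreserving.prodMap Measure.quasiMeasurePreserving_fst (.id ν))
  have hcut := (hshift.indicator
    (measurableSet_lt (measurable_snd.comp measurable_fst) measurable_snd)).integral_prod_right'
  refine hcut.congr (.of_forall fun p => ?_)
  exact integral_indicator (s := {s | p.2 < s}) measurableSet_Ioi

theorem eLpNorm_setIntegral_Ioi_sq_le {g : ℝ → ℝ → ℂ}
    (hg : AEStronglyMeasurable (fun p : ℝ × ℝ => g p.1 p.2)) (hzero : ∀ᵐ x, ∫ y, g x y = 0) :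
    eLpNorm (fun p : ℝ × ℝ => ∫ s in Ioi p.2, g p.1 s) 2 volume ^ 2 ≤
      ENNReal.ofReal π * (eLpNorm (fun p : ℝ × ℝ => g p.1 p.2) 2 volume ^ 2 +
        eLpNorm (fun p : ℝ × ℝ => (p.2 : ℂ) ^ 2 * g p.1 p.2) 2 volume ^ 2) := calc
  _ = ∫⁻ p : ℝ × ℝ, ‖∫ s in Ioi p.2, g p.1 s‖ₑ ^ 2 := eLpNorm_two_sq _
  _ ≤ ∫⁻ x, ∫⁻ y, ‖∫ s in Ioi y, g x s‖ₑ ^ 2 := lintegral_prod_le _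
  _ ≤ ∫⁻ x, ENNReal.ofReal π * ∫⁻ s, ENNReal.ofReal (1 + s ^ 4) * ‖g x s‖ₑ ^ 2 := by
      refine lintegral_mono_ae ?_
      filter_upwards [hzero, hg.prodMk_left] with x hx0 hxm
      exact lintegral_enorm_setIntegral_Ioi_sq_le hxm hx0
  _ = _ := by
      rw [lintegral_const_mul' _ _ ENNReal.ofReal_ne_top,
        ← lintegral_ofReal_one_add_pow_four_mul_enorm_sq hg.aemeasurable]
      congr 1
      exact (lintegral_prod _ ((Measurable.aemeasurable
        (by fun_prop : Measurable fun p : ℝ × ℝ => ENNReal.ofReal (1 + p.2 ^ 4))).mul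
        (hg.aemeasurable.enorm.pow_const 2))).symm

theorem statement1_general (g : ℝ → ℝ → ℂ)
    (hg : MemLp (fun p : ℝ × ℝ => g p.1 p.2) 2 volume)
    (hy2g : MemLp (fun p : ℝ × ℝ => (p.2 : ℂ) ^ 2 * g p.1 p.2) 2 volume)
    (hzero : ∀ᵐ x : ℝ, (∫ y : ℝ, g x y) = 0)
    (f : ℝ → ℝ → ℂ)
    (hf : ∀ x y : ℝ, f x y = ∫ t in Set.Ioi (0 : ℝ), g x (t + y)) :
    MemLp (fun p : ℝ × ℝ => f p.1 p.2) 2 volume ∧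
      (eLpNorm (fun p : ℝ × ℝ => f p.1 p.2) 2 volume).toReal ≤
        2 * ((eLpNorm (fun p : ℝ × ℝ => g p.1 p.2) 2 volume).toReal
          + (eLpNorm (fun p : ℝ × ℝ => (p.2 : ℂ) * g p.1 p.2) 2 volume).toReal
          + (eLpNorm (fun p : ℝ × ℝ => (p.2 : ℂ) ^ 2 * g p.1 p.2) 2 volume).toReal) := by
  have hf_Ioi : (fun p : ℝ × ℝ => f p.1 p.2) = fun p => ∫ s in Ioi p.2, g p.1 s :=
    funext fun p => by rw [hf, setIntegral_Ioi_zero_comp_add_right]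
  rw [hf_Ioi]
  set a := eLpNorm (fun p : ℝ × ℝ => g p.1 p.2) 2 volume
  set c := eLpNorm (fun p : ℝ × ℝ => (p.2 : ℂ) ^ 2 * g p.1 p.2) 2 volume
  have hsq := calc
    eLpNorm (fun p : ℝ × ℝ => ∫ s in Ioi p.2, g p.1 s) 2 volume ^ 2
      ≤ ENNReal.ofReal π * (a ^ 2 + c ^ 2) := eLpNorm_setIntegral_Ioi_sq_le hg.1 hzero
    _ ≤ 4 * (a + c) ^ 2 := by
        gcongr
        · exact ENNReal.ofReal_le_of_le_toReal (by norm_num [pi_le_four])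
        · rw [add_sq]
          exact add_le_add_left le_self_add _
    _ = (2 * (a + c)) ^ 2 := by ring
  have hle := (ENNReal.pow_le_pow_left_iff two_ne_zero).1 hsq
  have hfin : 2 * (a + c) ≠ ∞ := by finiteness
  refine ⟨⟨aestronglyMeasurable_setIntegral_Ioi_snd hg.1, hle.trans_lt hfin.lt_top⟩, ?_⟩
  calc _ ≤ (2 * (a + c)).toReal := ENNReal.toReal_mono hfin hle
    _ = 2 * (a.toReal + c.toReal) := by
        rw [ENNReal.toReal_mul, ENNReal.toReal_add hg.2.ne hy2g.2.ne, ENNReal.toReal_ofNat]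
    _ ≤ _ := by
        gcongr
        exact le_add_of_nonneg_right ENNReal.toReal_nonneg

/-- If `g, y·g, y²·g ∈ L²(ℝ²)` and `∫ g(x,y) dy = 0` for a.e. `x`, then
`f(x,y) = ∫_0^∞ g(x,t+y) dt` belongs to `L²(ℝ²)` with
`‖f‖ ≤ 2(‖g‖ + ‖y·g‖ + ‖y²·g‖)`. -/
theorem statement1 (g : ℝ → ℝ → ℂ)
    (hg : MemLp (fun p : ℝ × ℝ => g p.1 p.2) 2 volume)
    (hyg : MemLp (fun p : ℝ × ℝ => (p.2 : ℂ) * g p.1 p.2) 2 volume)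
    (hy2g : MemLp (fun p : ℝ × ℝ => (p.2 : ℂ) ^ 2 * g p.1 p.2) 2 volume)
    (hzero : ∀ᵐ x : ℝ, (∫ y : ℝ, g x y) = 0)
    (f : ℝ → ℝ → ℂ)
    (hf : ∀ x y : ℝ, f x y = ∫ t in Set.Ioi (0 : ℝ), g x (t + y)) :
    MemLp (fun p : ℝ × ℝ => f p.1 p.2) 2 volume ∧
      (eLpNorm (fun p : ℝ × ℝ => f p.1 p.2) 2 volume).toReal ≤
        2 * ((eLpNorm (fun p : ℝ × ℝ => g p.1 p.2) 2 volume).toReal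
          + (eLpNorm (fun p : ℝ × ℝ => (p.2 : ℂ) * g p.1 p.2) 2 volume).toReal
          + (eLpNorm (fun p : ℝ × ℝ => (p.2 : ℂ) ^ 2 * g p.1 p.2) 2 volume).toReal) :=
  statement1_general g hg hy2g hzero f hf
end

section
/- Let t ∈ ℝ and consider the differential operators on smooth functions on ℝ²: X = -x∂_x + y∂_y, U = √(-1)·t·x^{-2} − y∂_x, V = -x∂_y, Y₁ = -√(-1)·y, Y₂ = √(-1)·x. Then as operators on smooth functions supported away from {x = 0}, U∘Y₂² = -t√(-1) + V∘Y₁² − X∘Y₂∘Y₁. -/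
open Complex

/-- Partial derivative in the first variable. -/
noncomputable def dX (f : ℝ × ℝ → ℂ) (p : ℝ × ℝ) : ℂ := fderiv ℝ f p (1, 0)

/-- Partial derivative in the second variable. -/
noncomputable def dY (f : ℝ × ℝ → ℂ) (p : ℝ × ℝ) : ℂ := fderiv ℝ f p (0, 1)

/-- `X = -x∂_x + y∂_y`. -/
noncomputable def Xop (f : ℝ × ℝ → ℂ) (p : ℝ × ℝ) : ℂ :=
  -(p.1 : ℂ) * dX f p + (p.2 : ℂ) * dY f p

/-- `U = √(-1)·t·x⁻² − y∂_x`. -/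
noncomputable def Uop (t : ℝ) (f : ℝ × ℝ → ℂ) (p : ℝ × ℝ) : ℂ :=
  Complex.I * (t : ℂ) * ((p.1 : ℂ) ^ 2)⁻¹ * f p - (p.2 : ℂ) * dX f p

/-- `V = -x∂_y`. -/
noncomputable def Vop (f : ℝ × ℝ → ℂ) (p : ℝ × ℝ) : ℂ := -(p.1 : ℂ) * dY f p

/-- `Y₁ = -√(-1)·y`. -/
noncomputable def Y1op (f : ℝ × ℝ → ℂ) (p : ℝ × ℝ) : ℂ := -Complex.I * (p.2 : ℂ) * f p

/-- `Y₂ = √(-1)·x`. -/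
noncomputable def Y2op (f : ℝ × ℝ → ℂ) (p : ℝ × ℝ) : ℂ := Complex.I * (p.1 : ℂ) * f p

/-- The identity `U∘Y₂² = -t√(-1) + V∘Y₁² − X∘Y₂∘Y₁` holds on smooth functions on
`ℝ²` supported away from `{x = 0}`. -/
theorem statement9 (t : ℝ) (f : ℝ × ℝ → ℂ) (hf : ContDiff ℝ (⊤ : ℕ∞) f)
    (hsupp : tsupport f ⊆ {p : ℝ × ℝ | p.1 ≠ 0}) :
    ∀ p : ℝ × ℝ,
      Uop t (Y2op (Y2op f)) p =
        -(t : ℂ) * Complex.I * f p + Vop (Y1op (Y1op f)) p - Xop (Y2op (Y1op f)) p := by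

  intro p
  set Lx : (ℝ × ℝ) →L[ℝ] ℂ := Complex.ofRealCLM.comp (ContinuousLinearMap.fst ℝ ℝ ℝ) with hLx
  set Ly : (ℝ × ℝ) →L[ℝ] ℂ := Complex.ofRealCLM.comp (ContinuousLinearMap.snd ℝ ℝ ℝ) with hLy
  have hxD : HasFDerivAt (fun q : ℝ × ℝ => (q.1 : ℂ)) Lx p := Lx.hasFDerivAt
  have hyD : HasFDerivAt (fun q : ℝ × ℝ => (q.2 : ℂ)) Ly p := Ly.hasFDerivAt
  have hF : HasFDerivAt f (fderiv ℝ f p) p :=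
    ((hf.differentiable (by simp)) p).hasFDerivAt
  have hIx : HasFDerivAt (fun q : ℝ × ℝ => Complex.I * (q.1 : ℂ)) (Complex.I • Lx) p :=
    hxD.const_mul Complex.I
  have hmIy : HasFDerivAt (fun q : ℝ × ℝ => -Complex.I * (q.2 : ℂ)) ((-Complex.I) • Ly) p :=
    hyD.const_mul (-Complex.I)
  have hIxf := hIx.mul hF
  have hmIyf := hmIy.mul hF
  have h22 := hIx.mul hIxf
  have h11 := hmIy.mul hmIyf
  have h21 := hIx.mul hmIyf
  have e22 : Y2op (Y2op f) = fun q : ℝ × ℝ =>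
      (Complex.I * (q.1 : ℂ)) * ((Complex.I * (q.1 : ℂ)) * f q) := by
    funext q; simp [Y2op]
  have e11 : Y1op (Y1op f) = fun q : ℝ × ℝ =>
      (-Complex.I * (q.2 : ℂ)) * ((-Complex.I * (q.2 : ℂ)) * f q) := by
    funext q; simp [Y1op]
  have e21 : Y2op (Y1op f) = fun q : ℝ × ℝ =>
      (Complex.I * (q.1 : ℂ)) * ((-Complex.I * (q.2 : ℂ)) * f q) := by
    funext q; simp [Y1op, Y2op]
  simp only [Uop, Vop, Xop, dX, dY, e22, e11, e21, h22.fderiv, h11.fderiv, h21.fderiv,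
    hIxf.fderiv, hmIyf.fderiv]
  erw [h22.fderiv, h11.fderiv, h21.fderiv]
  simp only [ContinuousLinearMap.add_apply, ContinuousLinearMap.smul_apply,
    ContinuousLinearMap.comp_apply, Complex.ofRealCLM_apply, hLx, hLy, smul_eq_mul,
    Complex.ofReal_one, Complex.ofReal_zero, mul_one, mul_zero, add_zero, zero_add,
    Pi.mul_apply, ContinuousLinearMap.coe_fst', ContinuousLinearMap.coe_snd']
  by_cases hx0 : p.1 = 0
  · have hp : p ∉ tsupport f := fun h => (hsupp h) hx0
    have hfp : f p = 0 := image_eq_zero_of_notMem_tsupport hp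
    simp [hx0, hfp]
  · have hx0' : (p.1 : ℂ) ≠ 0 := by exact_mod_cast hx0
    field_simp
    linear_combination ((t : ℂ) * f p) * Complex.I_sq
end
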